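/- Let α ∈ (0,1) be fixed and X a real-valued random variable on a probability space (Ω,𝒜,P). Suppose f : ℝ → ℝ satisfies E[(f∘X)⁻] < ∞, f(x) ≤ f(x_{(α)}) for all x < x_{(α)}, and f(x) ≥ f(x_{(α)}) for all x > x_{(α)}. Let A ∈ 𝒜 be an event with P[A] ≥ α and E[|f∘X|·1_A] < ∞. If P[A ∩ {X > x_{(α)}}] = 0 and moreover either P[X < x_{(α)}] = 0, or (P[X < x_{(α)}] > 0, P[(Ω \ A) ∩ {X < x_{(α)}}] = 0, and P[A] = α), then TM_α(f∘X) = E[f∘X | A]. -/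

import Mathlib

open MeasureTheory ProbabilityTheory Filter
open scoped Classical

noncomputable section

variable {Ω : Type*} [MeasurableSpace Ω]

/-- Lower α-quantile: inf {x | P[X ≤ x] ≥ α}. -/
def lowerQuantile (P : Measure Ω) (X : Ω → ℝ) (α : ℝ) : ℝ :=
  sInf {x : ℝ | α ≤ (P {ω | X ω ≤ x}).toReal}

/-- Upper α-quantile: inf {x | P[X ≤ x] > α}. -/
def upperQuantile (P : Measure Ω) (X : Ω → ℝ) (α : ℝ) : ℝ :=
  sInf {x : ℝ | α < (P {ω | X ω ≤ x}).toReal}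

/-- α-tail mean. -/
def tailMean (P : Measure Ω) (X : Ω → ℝ) (α : ℝ) : ℝ :=
  α⁻¹ * ((∫ ω in {ω | X ω ≤ lowerQuantile P X α}, X ω ∂P)
    + lowerQuantile P X α * (α - (P {ω | X ω ≤ lowerQuantile P X α}).toReal))

/-- Expected Shortfall. -/
def ES (P : Measure Ω) (X : Ω → ℝ) (α : ℝ) : ℝ := - tailMean P X α

/-- Conditional expectation given an event: E[X | A] = E[X·1_A] / P[A]. -/
def condExpEvent (P : Measure Ω) (X : Ω → ℝ) (A : Set Ω) : ℝ :=
  (∫ ω in A, X ω ∂P) / (P A).toReal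

/-- Lower tail conditional expectation. -/
def TCElow (P : Measure Ω) (X : Ω → ℝ) (α : ℝ) : ℝ :=
  - condExpEvent P X {ω | X ω ≤ lowerQuantile P X α}

/-- Upper tail conditional expectation. -/
def TCEup (P : Measure Ω) (X : Ω → ℝ) (α : ℝ) : ℝ :=
  - condExpEvent P X {ω | X ω ≤ upperQuantile P X α}

/-- Worst conditional expectation. -/
def WCE (P : Measure Ω) (X : Ω → ℝ) (α : ℝ) : ℝ :=
  - sInf {y : ℝ | ∃ A : Set Ω, MeasurableSet A ∧ α < (P A).toReal ∧ y = condExpEvent P X A}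

/-- Conditional value-at-risk. -/
def CVaR (P : Measure Ω) (X : Ω → ℝ) (α : ℝ) : ℝ :=
  sInf {y : ℝ | ∃ s : ℝ, y = (∫ ω, max (-(X ω - s)) 0 ∂P) / α - s}

/-- Modified indicator 1^{(α)}_{X ≤ x}. -/
def modInd (P : Measure Ω) (X : Ω → ℝ) (α x : ℝ) (ω : Ω) : ℝ :=
  if P {a | X a = x} = 0 then Set.indicator {a | X a ≤ x} (fun _ => (1 : ℝ)) ω
  else Set.indicator {a | X a ≤ x} (fun _ => (1 : ℝ)) ω
    + ((α - (P {a | X a ≤ x}).toReal) / (P {a | X a = x}).toReal)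
      * Set.indicator {a | X a = x} (fun _ => (1 : ℝ)) ω

/-- Sum of the k smallest entries of (X 0 ω, ..., X (n-1) ω). -/
def tailSum (Xs : ℕ → Ω → ℝ) (n k : ℕ) (ω : Ω) : ℝ :=
  ((List.insertionSort (· ≤ ·) (List.ofFn fun i : Fin n => Xs i ω)).take k).sum

/-! Write `Y = f ∘ X`. If `{Y < c} ⊆ A ⊆ {Y ≤ c}` up to null sets, then
`∫_{Y ≤ c} Y - c P[Y ≤ c] = ∫_A Y - c P[A]`, because the two events differ only where `Y = c`.
For `c = q_α(Y)` this reads `α TM_α(Y) = ∫_A Y + q_α(Y) (α - P[A])`, which is `α E[Y | A]` when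
`P[A] = α`, and `α q_α(Y) = α E[Y | A]` when `Y = q_α(Y)` a.s. on `A`.

The monotonicity of `f` around `q = q_α(X)` gives `q_α(Y) ≤ f q` and `{Y < f q} ⊆ {X < q}`,
which turns the hypotheses on `A` into this sandwich: `A ⊆ {X ≤ q} ⊆ {Y ≤ f q}` a.s., and when
`q_α(Y) < f q`, the event `{Y ≤ q_α(Y)}` lies a.s. in `A` and has measure at least `α = P[A]`. -/

section Quantile

variable {P : Measure Ω} [IsProbabilityMeasure P] {X : Ω → ℝ} {α : ℝ}

lemma toReal_measure_le_eq_cdf (hX : Measurable X) (x : ℝ) :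
    (P {ω | X ω ≤ x}).toReal = cdf (P.map X) x := by
  have := Measure.isProbabilityMeasure_map (μ := P) hX.aemeasurable
  rw [cdf_eq_real, measureReal_def, Measure.map_apply hX measurableSet_Iic]
  rfl

lemma lowerQuantile_eq_sInf_cdf (hX : Measurable X) :
    lowerQuantile P X α = sInf {x | α ≤ cdf (P.map X) x} := by
  simp only [lowerQuantile, toReal_measure_le_eq_cdf hX]

lemma bddBelow_setOf_le_cdf (μ : Measure ℝ) (hα : 0 < α) : BddBelow {x | α ≤ cdf μ x} := by
  obtain ⟨x₀, hx₀⟩ := ((tendsto_cdf_atBot μ).eventually_lt_const hα).exists_forall_of_atBot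
  exact ⟨x₀, fun x hx => not_lt.1 fun hlt => (hx₀ x hlt.le).not_ge hx⟩

lemma nonempty_setOf_le_cdf (μ : Measure ℝ) (hα : α < 1) : {x | α ≤ cdf μ x}.Nonempty :=
  ((tendsto_cdf_atTop μ).eventually_const_lt hα).exists.imp fun _ => le_of_lt

lemma StieltjesFunction.le_apply_sInf_setOf_le (F : StieltjesFunction ℝ)
    (hne : {x | α ≤ F x}.Nonempty) :
    α ≤ F (sInf {x | α ≤ F x}) := by
  refine ge_of_tendsto ((F.right_continuous _).mono Set.Ioi_subset_Ici_self) ?_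
  filter_upwards [self_mem_nhdsWithin] with x hx
  obtain ⟨y, hy, hyx⟩ := exists_lt_of_csInf_lt hne hx
  exact hy.trans (F.mono hyx.le)

lemma lowerQuantile_le (hX : Measurable X) (hα : 0 < α) {x : ℝ}
    (hx : α ≤ (P {ω | X ω ≤ x}).toReal) : lowerQuantile P X α ≤ x := by
  rw [toReal_measure_le_eq_cdf hX] at hx
  rw [lowerQuantile_eq_sInf_cdf hX]
  exact csInf_le (bddBelow_setOf_le_cdf _ hα) hx

lemma le_measure_le_lowerQuantile (hX : Measurable X) (hα : α < 1) :
    α ≤ (P {ω | X ω ≤ lowerQuantile P X α}).toReal := by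
  rw [toReal_measure_le_eq_cdf hX, lowerQuantile_eq_sInf_cdf hX]
  exact (cdf _).le_apply_sInf_setOf_le (nonempty_setOf_le_cdf _ hα)

end Quantile

lemma ae_le_of_ae_le_of_measure_le {P : Measure Ω} [IsFiniteMeasure P] {s t : Set Ω}
    (hst : s ≤ᵐ[P] t) (hts : (P t).toReal ≤ (P s).toReal) (hs : NullMeasurableSet s P) :
    t ≤ᵐ[P] s :=
  (ae_eq_of_ae_subset_of_measure_ge hst
    ((ENNReal.toReal_le_toReal (by finiteness) (by finiteness)).1 hts) hs (by finiteness)).symm.le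

section TailSandwich

variable {P : Measure Ω} {Y : Ω → ℝ} {A : Set Ω} {c : ℝ}

lemma indicator_setOf_le_sub_ae_eq_of_sandwich (hlt : {ω | Y ω < c} ≤ᵐ[P] A)
    (hle : A ≤ᵐ[P] {ω | Y ω ≤ c}) :
    {ω | Y ω ≤ c}.indicator (fun ω => Y ω - c) =ᵐ[P] A.indicator (fun ω => Y ω - c) := by
  filter_upwards [hlt, hle] with ω hωlt hωle
  by_cases hωA : ω ∈ A
  · have hωc : ω ∈ {ω | Y ω ≤ c} := hωle hωA
    rw [Set.indicator_of_mem hωA, Set.indicator_of_mem hωc]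
  · rw [Set.indicator_of_notMem hωA]
    by_cases hωc : Y ω ≤ c
    · rw [Set.indicator_of_mem (s := {ω | Y ω ≤ c}) hωc, sub_eq_zero]
      exact hωc.antisymm (not_lt.1 fun h => hωA (hωlt h))
    · exact Set.indicator_of_notMem (s := {ω | Y ω ≤ c}) hωc _

variable [IsFiniteMeasure P]

lemma setIntegral_setOf_le_sub_eq_of_sandwich (hY : Measurable Y) (hA : MeasurableSet A)
    (hAint : IntegrableOn Y A P) (hlt : {ω | Y ω < c} ≤ᵐ[P] A) (hle : A ≤ᵐ[P] {ω | Y ω ≤ c}) :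
    ∫ ω in {ω | Y ω ≤ c}, Y ω ∂P - c * (P {ω | Y ω ≤ c}).toReal
      = ∫ ω in A, Y ω ∂P - c * (P A).toReal := by
  have hC : MeasurableSet {ω | Y ω ≤ c} := measurableSet_le hY measurable_const
  have hindicator := indicator_setOf_le_sub_ae_eq_of_sandwich hlt hle
  have hAint_sub : IntegrableOn (fun ω => Y ω - c) A P := hAint.sub integrableOn_const
  have hCint_sub : IntegrableOn (fun ω => Y ω - c) {ω | Y ω ≤ c} P := by
    rw [← integrable_indicator_iff hC]
    exact ((integrable_indicator_iff hA).2 hAint_sub).congr hindicator.symm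
  have hCint : IntegrableOn Y {ω | Y ω ≤ c} P := by
    simpa only [Pi.add_def, sub_add_cancel] using hCint_sub.add (integrableOn_const (C := c))
  have key : ∫ ω in {ω | Y ω ≤ c}, (Y ω - c) ∂P = ∫ ω in A, (Y ω - c) ∂P := by
    rw [← integral_indicator hC, ← integral_indicator hA]
    exact integral_congr_ae hindicator
  rw [integral_sub hCint integrableOn_const, integral_sub hAint integrableOn_const,
    setIntegral_const, setIntegral_const, smul_eq_mul, smul_eq_mul, measureReal_def,
    measureReal_def] at key
  linarith

lemma mul_tailMean_eq_of_sandwich {α : ℝ} (hα : α ≠ 0) (hY : Measurable Y) (hA : MeasurableSet A)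
    (hAint : IntegrableOn Y A P) (hlt : {ω | Y ω < lowerQuantile P Y α} ≤ᵐ[P] A)
    (hle : A ≤ᵐ[P] {ω | Y ω ≤ lowerQuantile P Y α}) :
    α * tailMean P Y α = ∫ ω in A, Y ω ∂P + lowerQuantile P Y α * (α - (P A).toReal) := by
  have h := setIntegral_setOf_le_sub_eq_of_sandwich hY hA hAint hlt hle
  rw [tailMean, ← mul_assoc, mul_inv_cancel₀ hα, one_mul]
  linarith

lemma tailMean_eq_condExpEvent_of_measure_eq {α : ℝ} (hY : Measurable Y) (hA : MeasurableSet A)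
    (hAint : IntegrableOn Y A P) (hPA : (P A).toReal = α) (hα : α ≠ 0)
    (hlt : {ω | Y ω < lowerQuantile P Y α} ≤ᵐ[P] A)
    (hle : A ≤ᵐ[P] {ω | Y ω ≤ lowerQuantile P Y α}) :
    tailMean P Y α = condExpEvent P Y A := by
  have h := mul_tailMean_eq_of_sandwich hα hY hA hAint hlt hle
  rw [hPA, sub_self, mul_zero, add_zero] at h
  rw [condExpEvent, hPA, eq_div_iff hα, mul_comm, h]

lemma tailMean_eq_condExpEvent_of_measure_lt_eq_zero {α : ℝ} (hY : Measurable Y)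
    (hA : MeasurableSet A) (hAint : IntegrableOn Y A P) (hPA : (P A).toReal ≠ 0) (hα : α ≠ 0)
    (hnull : P {ω | Y ω < lowerQuantile P Y α} = 0)
    (hle : A ≤ᵐ[P] {ω | Y ω ≤ lowerQuantile P Y α}) :
    tailMean P Y α = condExpEvent P Y A := by
  set q := lowerQuantile P Y α
  have hlt : {ω | Y ω < q} ≤ᵐ[P] A := ae_le_set.2 (measure_mono_null Set.sdiff_subset hnull)
  -- `∅` also lies between `{Y < q}` and `{Y ≤ q}`, so `∫_A Y - q P[A] = ∫_∅ Y - q P[∅] = 0`.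
  have hA_eq := (setIntegral_setOf_le_sub_eq_of_sandwich hY hA hAint hlt hle).symm.trans
    (setIntegral_setOf_le_sub_eq_of_sandwich hY MeasurableSet.empty integrableOn_empty
      (ae_le_set.2 (by simpa using hnull)) (ae_le_set.2 (by simp)))
  have h := mul_tailMean_eq_of_sandwich hα hY hA hAint hlt hle
  rw [setIntegral_empty, measure_empty, ENNReal.toReal_zero, mul_zero, sub_zero] at hA_eq
  have htail : tailMean P Y α = q := mul_left_cancel₀ hα (by linarith)
  rw [htail, condExpEvent, eq_div_iff hPA]
  linarith

end TailSandwich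

section Composition

variable {f : ℝ → ℝ} {q x : ℝ}

lemma apply_le_of_le (hfle : ∀ x < q, f x ≤ f q) (hx : x ≤ q) : f x ≤ f q := by
  rcases hx.lt_or_eq with hx | rfl
  · exact hfle x hx
  · exact le_rfl

lemma lt_of_apply_lt (hfge : ∀ x, q < x → f q ≤ f x) (hx : f x < f q) : x < q := by
  by_contra! hq
  rcases hq.lt_or_eq with hq | rfl
  · exact (hfge x hq).not_gt hx
  · exact hx.false

lemma lowerQuantile_comp_le {P : Measure Ω} [IsProbabilityMeasure P] {X : Ω → ℝ} {α : ℝ}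
    (hX : Measurable X) (hf : Measurable f) (hα₀ : 0 < α) (hα₁ : α < 1)
    (hfle : ∀ x < lowerQuantile P X α, f x ≤ f (lowerQuantile P X α)) :
    lowerQuantile P (fun ω => f (X ω)) α ≤ f (lowerQuantile P X α) :=
  lowerQuantile_le (hf.comp hX) hα₀ ((le_measure_le_lowerQuantile hX hα₁).trans
    (ENNReal.toReal_mono (by finiteness) (measure_mono fun _ => apply_le_of_le hfle)))

lemma lowerQuantile_comp_eq_of_measure_lt_eq_zero {P : Measure Ω} [IsProbabilityMeasure P]
    {X : Ω → ℝ} {α : ℝ} (hX : Measurable X) (hf : Measurable f) (hα₀ : 0 < α) (hα₁ : α < 1)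
    (hfle : ∀ x < lowerQuantile P X α, f x ≤ f (lowerQuantile P X α))
    (hfge : ∀ x, lowerQuantile P X α < x → f (lowerQuantile P X α) ≤ f x)
    (hnull : P {ω | X ω < lowerQuantile P X α} = 0) :
    lowerQuantile P (fun ω => f (X ω)) α = f (lowerQuantile P X α) := by
  refine (lowerQuantile_comp_le hX hf hα₀ hα₁ hfle).antisymm (not_lt.1 fun hlt => ?_)
  have h0 : P {ω | f (X ω) ≤ lowerQuantile P (fun ω => f (X ω)) α} = 0 :=
    measure_mono_null (fun _ h => lt_of_apply_lt hfge (lt_of_le_of_lt h hlt)) hnull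
  have hα := le_measure_le_lowerQuantile (P := P) (X := fun ω => f (X ω)) (hf.comp hX) hα₁
  rw [h0, ENNReal.toReal_zero] at hα
  exact hα₀.not_ge hα

end Composition

theorem tailMean_eq_condExp_of_general (P : Measure Ω) [IsProbabilityMeasure P] (α : ℝ)
    (hα : α ∈ Set.Ioo (0:ℝ) 1)
    (X : Ω → ℝ) (hX : Measurable X) (f : ℝ → ℝ) (hf : Measurable f)
    (hfle : ∀ x < lowerQuantile P X α, f x ≤ f (lowerQuantile P X α))
    (hfge : ∀ x, lowerQuantile P X α < x → f (lowerQuantile P X α) ≤ f x)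
    (A : Set Ω) (hA : MeasurableSet A) (hPA : α ≤ (P A).toReal)
    (hAint : Integrable (fun ω => |f (X ω)|) (P.restrict A))
    (hAup : P (A ∩ {ω | lowerQuantile P X α < X ω}) = 0)
    (hcond : P {ω | X ω < lowerQuantile P X α} = 0 ∨
      (0 < P {ω | X ω < lowerQuantile P X α} ∧
        P (Aᶜ ∩ {ω | X ω < lowerQuantile P X α}) = 0 ∧ (P A).toReal = α)) :
    tailMean P (fun ω => f (X ω)) α = condExpEvent P (fun ω => f (X ω)) A := by
  obtain ⟨hα₀, hα₁⟩ := hα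
  set q := lowerQuantile P X α
  set Y := fun ω => f (X ω)
  set qY := lowerQuantile P Y α
  have hY : Measurable Y := hf.comp hX
  have hYA : IntegrableOn Y A P :=
    (integrable_norm_iff hY.aestronglyMeasurable).1 (by simpa only [Real.norm_eq_abs] using hAint)
  have hqY : qY ≤ f q := lowerQuantile_comp_le hX hf hα₀ hα₁ hfle
  have hYX : {ω | Y ω < qY} ⊆ {ω | X ω < q} := fun _ h => lt_of_apply_lt hfge (h.trans_le hqY)
  have hAX : A ≤ᵐ[P] {ω | X ω ≤ q} := by
    refine ae_le_set.2 (measure_mono_null (fun ω h => ?_) hAup)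
    exact ⟨h.1, show q < X ω from not_le.1 h.2⟩
  have hAle (hq : qY = f q) : A ≤ᵐ[P] {ω | Y ω ≤ qY} :=
    hAX.trans (LE.le.eventuallyLE fun _ h => hq ▸ apply_le_of_le hfle h)
  rcases hcond with hnull | ⟨-, hAc, hPAα⟩
  · exact tailMean_eq_condExpEvent_of_measure_lt_eq_zero hY hA hYA (hα₀.trans_le hPA).ne'
      hα₀.ne' (measure_mono_null hYX hnull)
      (hAle (lowerQuantile_comp_eq_of_measure_lt_eq_zero hX hf hα₀ hα₁ hfle hfge hnull))
  · have hXA : {ω | X ω < q} ≤ᵐ[P] A := ae_le_set.2 (by rwa [Set.sdiff_eq_compl_inter])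
    refine tailMean_eq_condExpEvent_of_measure_eq hY hA hYA hPAα hα₀.ne'
      ((LE.le.eventuallyLE hYX).trans hXA) ?_
    rcases hqY.eq_or_lt with hq | hlt
    · exact hAle hq
    · exact ae_le_of_ae_le_of_measure_le
        ((LE.le.eventuallyLE fun _ h => lt_of_apply_lt hfge (lt_of_le_of_lt h hlt)).trans hXA)
        (hPAα.trans_le (le_measure_le_lowerQuantile hY hα₁))
        (measurableSet_le hY measurable_const).nullMeasurableSet

/-- Sufficient conditions for equality of the tail mean of f∘X and the
conditional expectation of f∘X given A. -/
theorem tailMean_eq_condExp_of (P : Measure Ω) [IsProbabilityMeasure P] (α : ℝ)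
    (hα : α ∈ Set.Ioo (0:ℝ) 1)
    (X : Ω → ℝ) (hX : Measurable X) (f : ℝ → ℝ) (hf : Measurable f)
    (hfint : Integrable (fun ω => max (-(f (X ω))) 0) P)
    (hfle : ∀ x < lowerQuantile P X α, f x ≤ f (lowerQuantile P X α))
    (hfge : ∀ x, lowerQuantile P X α < x → f (lowerQuantile P X α) ≤ f x)
    (A : Set Ω) (hA : MeasurableSet A) (hPA : α ≤ (P A).toReal)
    (hAint : Integrable (fun ω => |f (X ω)|) (P.restrict A))
    (hAup : P (A ∩ {ω | lowerQuantile P X α < X ω}) = 0)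
    (hcond : P {ω | X ω < lowerQuantile P X α} = 0 ∨
      (0 < P {ω | X ω < lowerQuantile P X α} ∧
        P (Aᶜ ∩ {ω | X ω < lowerQuantile P X α}) = 0 ∧ (P A).toReal = α)) :
    tailMean P (fun ω => f (X ω)) α = condExpEvent P (fun ω => f (X ω)) A :=
  tailMean_eq_condExp_of_general P α hα X hX f hf hfle hfge A hA hPA hAint hAup hcond

end
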